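/- arXiv:math/0202283 — 2 statements merged into one kernel-verified Lean document; each statement's English description precedes it below -/
import Mathlib

section
/- Let 𝒰 and 𝒱 be uniformities on a set S. Then the filter 𝒰 ∘ 𝒱 (generated by compositions U ∘ V with U ∈ 𝒰, V ∈ 𝒱) equals the join uniformity 𝒰 ⊔ 𝒱 if and only if 𝒱 ∘ 𝒰 ≤ 𝒰 ∘ 𝒱 (i.e., every U ∘ V with U ∈ 𝒰, V ∈ 𝒱 contains some V' ∘ U' with U' ∈ 𝒰, V' ∈ 𝒱). -/
/-!
Write `F ∘ G` for `relFilterComp F G` and `𝒰⁻¹` for `𝒰.map Prod.swap`. The uniformity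
axioms say `𝓟 Δ ≤ 𝒰`, `𝒰⁻¹ ≤ 𝒰` and `𝒰 ∘ 𝒰 ≤ 𝒰`, and composition of filters of
relations is associative, monotone, has `𝓟 Δ` as unit and is reversed by inversion.
Hence `𝒰 ∘ 𝒱` lies above `𝒰` and `𝒱`, and below every uniformity `𝒲` above both
(`𝒰 ∘ 𝒱 ≤ 𝒲 ∘ 𝒲 ≤ 𝒲`), so it is the join exactly when it is a uniformity. Its inverse
is `𝒱 ∘ 𝒰`, which gives the condition; conversely the condition makes `𝒰 ∘ 𝒱`
symmetric, and `(𝒰 ∘ 𝒱) ∘ (𝒰 ∘ 𝒱) = 𝒰 ∘ (𝒱 ∘ 𝒰) ∘ 𝒱 ≤ (𝒰 ∘ 𝒰) ∘ (𝒱 ∘ 𝒱) ≤ 𝒰 ∘ 𝒱`.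
-/

/-- A uniformity on `S`, viewed as a filter of binary relations (entourages):
every entourage contains the diagonal, entourages are closed under relational
inverse, and every entourage contains the square of some entourage.
(Upward closure and finite intersections are part of being a filter.) -/
def IsUniformity {S : Type*} (𝒰 : Filter (S × S)) : Prop :=
  (∀ U ∈ 𝒰, ∀ x : S, (x, x) ∈ U) ∧
  (∀ U ∈ 𝒰, {p : S × S | (p.2, p.1) ∈ U} ∈ 𝒰) ∧
  (∀ U ∈ 𝒰, ∃ V ∈ 𝒰, SetRel.comp V V ⊆ U)

/-- The filter of binary relations on `S` with base `{U ○ V | U ∈ F, V ∈ G}`. -/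
def relFilterComp {S : Type*} (F G : Filter (S × S)) : Filter (S × S) where
  sets := {W | ∃ U ∈ F, ∃ V ∈ G, SetRel.comp U V ⊆ W}
  univ_sets := ⟨Set.univ, F.univ_sets, Set.univ, G.univ_sets, Set.subset_univ _⟩
  sets_of_superset := by
    rintro W W' ⟨U, hU, V, hV, h⟩ hWW'
    exact ⟨U, hU, V, hV, h.trans hWW'⟩
  inter_sets := by
    rintro W W' ⟨U, hU, V, hV, h⟩ ⟨U', hU', V', hV', h'⟩
    refine ⟨U ∩ U', F.inter_sets hU hU', V ∩ V', G.inter_sets hV hV', ?_⟩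
    rintro ⟨x, z⟩ ⟨y, hy1, hy2⟩
    exact ⟨h ⟨y, hy1.1, hy2.1⟩, h' ⟨y, hy1.2, hy2.2⟩⟩

open Filter SetRel

section relFilterComp

variable {S : Type*} {F G H F' G' : Filter (S × S)} {s : Set (S × S)}

lemma mem_relFilterComp : s ∈ relFilterComp F G ↔ ∃ U ∈ F, ∃ V ∈ G, U ○ V ⊆ s :=
  Iff.rfl

lemma relFilterComp_mono (hF : F ≤ F') (hG : G ≤ G') :
    relFilterComp F G ≤ relFilterComp F' G' := by
  rintro s ⟨U, hU, V, hV, h⟩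
  exact ⟨U, hF hU, V, hG hV, h⟩

lemma mem_relFilterComp_relFilterComp_left :
    s ∈ relFilterComp (relFilterComp F G) H ↔ ∃ A ∈ F, ∃ B ∈ G, ∃ C ∈ H, A ○ B ○ C ⊆ s := by
  constructor
  · rintro ⟨W, ⟨A, hA, B, hB, hAB⟩, C, hC, h⟩
    exact ⟨A, hA, B, hB, C, hC, (comp_subset_comp_left hAB).trans h⟩
  · rintro ⟨A, hA, B, hB, C, hC, h⟩
    exact ⟨A ○ B, ⟨A, hA, B, hB, subset_rfl⟩, C, hC, h⟩

lemma mem_relFilterComp_relFilterComp_right :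
    s ∈ relFilterComp F (relFilterComp G H) ↔ ∃ A ∈ F, ∃ B ∈ G, ∃ C ∈ H, A ○ (B ○ C) ⊆ s := by
  constructor
  · rintro ⟨A, hA, W, ⟨B, hB, C, hC, hBC⟩, h⟩
    exact ⟨A, hA, B, hB, C, hC, (comp_subset_comp_right hBC).trans h⟩
  · rintro ⟨A, hA, B, hB, C, hC, h⟩
    exact ⟨A, hA, B ○ C, ⟨B, hB, C, hC, subset_rfl⟩, h⟩

lemma relFilterComp_assoc :
    relFilterComp (relFilterComp F G) H = relFilterComp F (relFilterComp G H) := by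
  ext s
  simp only [mem_relFilterComp_relFilterComp_left, mem_relFilterComp_relFilterComp_right,
    comp_assoc]

lemma relFilterComp_principal_id (F : Filter (S × S)) :
    relFilterComp F (𝓟 SetRel.id) = F := by
  ext s
  constructor
  · rintro ⟨U, hU, V, hV, h⟩
    have hV : SetRel.id ⊆ V := mem_principal.mp hV
    exact mem_of_superset hU
      ((comp_id U).symm.subset.trans ((comp_subset_comp_right hV).trans h))
  · exact fun hs ↦ ⟨s, hs, SetRel.id, mem_principal_self _, (comp_id s).subset⟩

lemma principal_id_relFilterComp (F : Filter (S × S)) :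
    relFilterComp (𝓟 SetRel.id) F = F := by
  ext s
  constructor
  · rintro ⟨U, hU, V, hV, h⟩
    have hU : SetRel.id ⊆ U := mem_principal.mp hU
    exact mem_of_superset hV
      ((id_comp V).symm.subset.trans ((comp_subset_comp_left hU).trans h))
  · exact fun hs ↦ ⟨SetRel.id, mem_principal_self _, s, hs, (id_comp s).subset⟩

lemma map_swap_relFilterComp (F G : Filter (S × S)) :
    (relFilterComp F G).map Prod.swap =
      relFilterComp (G.map Prod.swap) (F.map Prod.swap) := by
  ext s
  simp only [mem_map, mem_relFilterComp]
  constructor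
  · rintro ⟨U, hU, V, hV, h⟩
    exact ⟨SetRel.inv V, hV, SetRel.inv U, hU, (inv_comp U V).symm.subset.trans (inv_mono h)⟩
  · rintro ⟨V, hV, U, hU, h⟩
    exact ⟨SetRel.inv U, hU, SetRel.inv V, hV, (inv_comp V U).symm.subset.trans (inv_mono h)⟩

lemma map_swap_eq_of_le (hF : F.map Prod.swap ≤ F) : F.map Prod.swap = F := by
  refine le_antisymm hF ?_
  calc F = (F.map Prod.swap).map Prod.swap := by simp [map_map, Prod.swap_swap_eq]
    _ ≤ F.map Prod.swap := map_mono hF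

lemma map_swap_relFilterComp_of_le (hF : F.map Prod.swap ≤ F) (hG : G.map Prod.swap ≤ G) :
    (relFilterComp F G).map Prod.swap = relFilterComp G F := by
  rw [map_swap_relFilterComp, map_swap_eq_of_le hF, map_swap_eq_of_le hG]

end relFilterComp

lemma isUniformity_iff {S : Type*} {𝒰 : Filter (S × S)} :
    IsUniformity 𝒰 ↔
      𝓟 SetRel.id ≤ 𝒰 ∧ 𝒰.map Prod.swap ≤ 𝒰 ∧ relFilterComp 𝒰 𝒰 ≤ 𝒰 := by
  refine and_congr ?_ (and_congr Iff.rfl ?_)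
  · rw [principal_le_iff]
    refine forall₂_congr fun U _ ↦ ⟨fun h ↦ ?_, fun h x ↦ h rfl⟩
    rintro ⟨x, _⟩ rfl
    exact h x
  · constructor
    · rintro h U hU
      obtain ⟨V, hV, hVU⟩ := h U hU
      exact ⟨V, hV, V, hV, hVU⟩
    · rintro h U hU
      obtain ⟨A, hA, B, hB, hAB⟩ := h hU
      exact ⟨A ∩ B, inter_mem hA hB,
        (comp_subset_comp Set.inter_subset_left Set.inter_subset_right).trans hAB⟩

/-- For uniformities `𝒰`, `𝒱` on a set `S` (filters ordered by reverse
inclusion, which is the order on `Filter`), the filter `𝒰 ∘ 𝒱` is the join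
`𝒰 ⊔ 𝒱` in the poset of uniformities (the least uniformity above both) if and
only if `𝒱 ∘ 𝒰 ≤ 𝒰 ∘ 𝒱`. -/
theorem stmt1 {S : Type*} (𝒰 𝒱 : Filter (S × S))
    (hU : IsUniformity 𝒰) (hV : IsUniformity 𝒱) :
    IsLeast {𝒲 : Filter (S × S) | IsUniformity 𝒲 ∧ 𝒰 ≤ 𝒲 ∧ 𝒱 ≤ 𝒲}
        (relFilterComp 𝒰 𝒱) ↔
      relFilterComp 𝒱 𝒰 ≤ relFilterComp 𝒰 𝒱 := by
  obtain ⟨hU_refl, hU_symm, hU_trans⟩ := isUniformity_iff.mp hU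
  obtain ⟨hV_refl, hV_symm, hV_trans⟩ := isUniformity_iff.mp hV
  have hswap := map_swap_relFilterComp_of_le hU_symm hV_symm
  refine ⟨fun h ↦ hswap ▸ (isUniformity_iff.mp h.1.1).2.1, fun h ↦ ?_⟩
  have hcomm : relFilterComp 𝒱 𝒰 = relFilterComp 𝒰 𝒱 := by
    refine le_antisymm h ?_
    simpa only [hswap, map_swap_relFilterComp_of_le hV_symm hU_symm]
      using map_mono (m := Prod.swap) h
  have hU_le : 𝒰 ≤ relFilterComp 𝒰 𝒱 :=
    (relFilterComp_principal_id 𝒰).ge.trans (relFilterComp_mono le_rfl hV_refl)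
  have hV_le : 𝒱 ≤ relFilterComp 𝒰 𝒱 :=
    (principal_id_relFilterComp 𝒱).ge.trans (relFilterComp_mono hU_refl le_rfl)
  refine ⟨⟨isUniformity_iff.mpr ⟨hU_refl.trans hU_le, (hswap.trans hcomm).le, ?_⟩, hU_le, hV_le⟩,
    fun 𝒲 ⟨hW, hUW, hVW⟩ ↦ (relFilterComp_mono hUW hVW).trans (isUniformity_iff.mp hW).2.2⟩
  calc relFilterComp (relFilterComp 𝒰 𝒱) (relFilterComp 𝒰 𝒱)
      = relFilterComp 𝒰 (relFilterComp (relFilterComp 𝒱 𝒰) 𝒱) := by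
        simp only [relFilterComp_assoc]
    _ = relFilterComp (relFilterComp 𝒰 𝒰) (relFilterComp 𝒱 𝒱) := by
        rw [hcomm]; simp only [relFilterComp_assoc]
    _ ≤ relFilterComp 𝒰 𝒱 := relFilterComp_mono hU_trans hV_trans
end

section
/- If 𝒰 and 𝒱 are uniformities on a set S and 𝒱 ∘ 𝒰 ≤ 𝒰 ∘ 𝒱, then the filter 𝒰 ∘ 𝒱 is itself a uniformity (it satisfies the symmetry axiom and the square-refinement axiom). -/
open SetRel

lemma SetRel.comp_comp_comp_subset_of_comp_subset {α β γ δ ε η : Type*} {A : SetRel α β}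
    {B : SetRel β γ} {C : SetRel γ δ} {D : SetRel δ ε} {C' : SetRel β η} {B' : SetRel η δ}
    (h : B ○ C ⊆ C' ○ B') : (A ○ B) ○ (C ○ D) ⊆ (A ○ C') ○ (B' ○ D) := by
  rw [comp_assoc, ← comp_assoc B, comp_assoc A C', ← comp_assoc C']
  exact comp_subset_comp_right (comp_subset_comp_left h)

section relFilterComp

variable {S : Type*} {F G : Filter (S × S)}

lemma comp_mem_relFilterComp {U V : SetRel S S} (hU : U ∈ F) (hV : V ∈ G) :
    U ○ V ∈ relFilterComp F G :=
  ⟨U, hU, V, hV, subset_rfl⟩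

lemma relFilterComp_mem_refl (hF : ∀ U ∈ F, ∀ x : S, (x, x) ∈ U)
    (hG : ∀ V ∈ G, ∀ x : S, (x, x) ∈ V) :
    ∀ W ∈ relFilterComp F G, ∀ x : S, (x, x) ∈ W := by
  rintro W ⟨U, hU, V, hV, hUV⟩ x
  exact hUV (prodMk_mem_comp (hF U hU x) (hG V hV x))

lemma inv_mem_relFilterComp (hF : ∀ U ∈ F, SetRel.inv U ∈ F) (hG : ∀ V ∈ G, SetRel.inv V ∈ G)
    {W : SetRel S S} (hW : W ∈ relFilterComp G F) : W.inv ∈ relFilterComp F G := by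
  obtain ⟨V, hV, U, hU, hVU⟩ := hW
  refine ⟨SetRel.inv U, hF U hU, SetRel.inv V, hG V hV, ?_⟩
  rw [← inv_comp]
  exact inv_mono hVU

/-- With `U₁ ○ U₁ ⊆ U`, `V₁ ○ V₁ ⊆ V` and `V₂ ○ U₂ ⊆ U₁ ○ V₁` (from `hcomm`), the middle of the
square of `(U₁ ∩ U₂) ○ (V₁ ∩ V₂)` can be swapped, which leaves `(U₁ ○ U₁) ○ (V₁ ○ V₁)`. -/
lemma exists_comp_self_subset_of_mem_relFilterComp
    (hF : ∀ U ∈ F, ∃ U₁ ∈ F, U₁ ○ U₁ ⊆ U) (hG : ∀ V ∈ G, ∃ V₁ ∈ G, V₁ ○ V₁ ⊆ V)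
    (hcomm : relFilterComp G F ≤ relFilterComp F G) :
    ∀ W ∈ relFilterComp F G, ∃ W₁ ∈ relFilterComp F G, W₁ ○ W₁ ⊆ W := by
  rintro W ⟨U, hU, V, hV, hUV⟩
  obtain ⟨U₁, hU₁, hU₁U⟩ := hF U hU
  obtain ⟨V₁, hV₁, hV₁V⟩ := hG V hV
  obtain ⟨V₂, hV₂, U₂, hU₂, hswap⟩ := hcomm (comp_mem_relFilterComp hU₁ hV₁)
  refine ⟨(U₁ ∩ U₂) ○ (V₁ ∩ V₂),
    comp_mem_relFilterComp (Filter.inter_mem hU₁ hU₂) (Filter.inter_mem hV₁ hV₂), ?_⟩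
  have hmiddle : (V₁ ∩ V₂) ○ (U₁ ∩ U₂) ⊆ U₁ ○ V₁ :=
    (comp_subset_comp Set.inter_subset_right Set.inter_subset_right).trans hswap
  calc ((U₁ ∩ U₂) ○ (V₁ ∩ V₂)) ○ ((U₁ ∩ U₂) ○ (V₁ ∩ V₂))
      ⊆ ((U₁ ∩ U₂) ○ U₁) ○ (V₁ ○ (V₁ ∩ V₂)) :=
        comp_comp_comp_subset_of_comp_subset hmiddle
    _ ⊆ (U₁ ○ U₁) ○ (V₁ ○ V₁) :=
        comp_subset_comp (comp_subset_comp_left Set.inter_subset_left)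
          (comp_subset_comp_right Set.inter_subset_left)
    _ ⊆ W := (comp_subset_comp hU₁U hV₁V).trans hUV

end relFilterComp

/-- If `𝒰` and `𝒱` are uniformities on `S` and `𝒱 ∘ 𝒰 ≤ 𝒰 ∘ 𝒱`, then the
filter `𝒰 ∘ 𝒱` is itself a uniformity. -/
theorem stmt2 {S : Type*} (𝒰 𝒱 : Filter (S × S))
    (hU : IsUniformity 𝒰) (hV : IsUniformity 𝒱)
    (h : relFilterComp 𝒱 𝒰 ≤ relFilterComp 𝒰 𝒱) :
    IsUniformity (relFilterComp 𝒰 𝒱) := by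
  obtain ⟨hU_refl, hU_symm, hU_square⟩ := hU
  obtain ⟨hV_refl, hV_symm, hV_square⟩ := hV
  exact ⟨relFilterComp_mem_refl hU_refl hV_refl,
    fun W hW ↦ inv_mem_relFilterComp hU_symm hV_symm (h hW),
    exists_comp_self_subset_of_mem_relFilterComp hU_square hV_square h⟩
end
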